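/- For 0 ≤ j ≤ n−1, the polynomial R_j(z) := −Q_n^j(z) π_n(z) + P_n^j(z) · (−2πi κ_{n-1}² π_{n-1}(z)) satisfies ∫_ℝ R_j(x) π_{n−j−1}(x) e^{-V(x)} dx = −2πi. -/

import Mathlib

/-!
Up to the factor `−2πi κ_{n−1}²`, `R_j = P π_{n−1} − Q π_n`, where `P` (the top `j + 1`
coefficients of `π_n`) is monic of degree `j` and `Q` (those of `π_{n−1}`) has degree at most `j`.
So `Q π_{n−j−1}` has degree `< n` and is orthogonal to `π_n`, while `P π_{n−j−1}` is monic of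
degree `n − 1`, so its pairing with `π_{n−1}` is `‖π_{n−1}‖² = κ_{n−1}⁻²`, which cancels `κ_{n−1}²`.
-/

open MeasureTheory Polynomial

noncomputable section

/-- The coefficient `b_j` of `z^{n-j}` in `π_n`. -/
def bcoef (n : ℕ) (p : ℕ → Polynomial ℝ) (j : ℕ) : ℂ :=
  if j ≤ n then (((p n).coeff (n - j) : ℝ) : ℂ) else 0

/-- The coefficient `c_j` of `z^{n-j}` in `−2πi κ_{n-1}² π_{n-1}`. -/
def ccoef (n : ℕ) (p : ℕ → Polynomial ℝ) (κ : ℕ → ℝ) (j : ℕ) : ℂ :=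
  if j ≤ n then
    -(2 * Real.pi * Complex.I) * ((κ (n - 1) : ℝ) : ℂ) ^ 2 * (((p (n - 1)).coeff (n - j) : ℝ) : ℂ)
  else 0

/-- The truncation `b_0 z^j + b_1 z^{j-1} + ⋯ + b_j` of a coefficient sequence. -/
def Ptrunc (b : ℕ → ℂ) (j : ℕ) (z : ℂ) : ℂ :=
  ∑ m ∈ Finset.range (j + 1), b m * z ^ (j - m)

/-- The polynomial `R_j(z) = −Q_n^j(z) π_n(z) + P_n^j(z) · (−2πi κ_{n-1}² π_{n-1}(z))`. -/
def Rfun (n : ℕ) (p : ℕ → Polynomial ℝ) (κ : ℕ → ℝ) (j : ℕ) (z : ℂ) : ℂ :=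
  -(Ptrunc (ccoef n p κ) j z) * Polynomial.aeval z (p n) +
    Ptrunc (bcoef n p) j z *
      (-(2 * Real.pi * Complex.I) * ((κ (n - 1) : ℝ) : ℂ) ^ 2 * Polynomial.aeval z (p (n - 1)))

def weightedPairing (V : ℝ → ℝ) (f g : ℝ[X]) : ℝ :=
  ∫ x, f.eval x * g.eval x * Real.exp (-V x)

section WeightedPairing

variable {V : ℝ → ℝ}

theorem integrable_pow_mul_exp_neg
    (hVint : ∀ k : ℕ, Integrable (fun x : ℝ => |x| ^ k * Real.exp (-V x))) (k : ℕ) :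
    Integrable (fun x : ℝ => x ^ k * Real.exp (-V x)) := by
  have hw : AEStronglyMeasurable (fun x => Real.exp (-V x)) := by
    simpa using (hVint 0).aestronglyMeasurable
  refine (hVint k).mono' ((continuous_pow k).aestronglyMeasurable.mul hw) (ae_of_all _ fun x => ?_)
  simp

theorem integrable_eval_mul_exp_neg
    (hVint : ∀ k : ℕ, Integrable (fun x : ℝ => |x| ^ k * Real.exp (-V x))) (q : ℝ[X]) :
    Integrable (fun x : ℝ => q.eval x * Real.exp (-V x)) := by
  induction q using Polynomial.induction_on' with
  | add f g hf hg =>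
    exact (hf.add hg).congr (ae_of_all _ fun x => by simp [add_mul])
  | monomial i c => simpa [mul_assoc] using (integrable_pow_mul_exp_neg hVint i).const_mul c

theorem weightedPairing_add_left
    (hVint : ∀ k : ℕ, Integrable (fun x : ℝ => |x| ^ k * Real.exp (-V x))) (f g h : ℝ[X]) :
    weightedPairing V (f + g) h = weightedPairing V f h + weightedPairing V g h := by
  simp only [weightedPairing, eval_add, add_mul, ← eval_mul]
  exact integral_add (integrable_eval_mul_exp_neg hVint _) (integrable_eval_mul_exp_neg hVint _)

theorem weightedPairing_sub_left
    (hVint : ∀ k : ℕ, Integrable (fun x : ℝ => |x| ^ k * Real.exp (-V x))) (f g h : ℝ[X]) :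
    weightedPairing V (f - g) h = weightedPairing V f h - weightedPairing V g h := by
  simp only [weightedPairing, eval_sub, sub_mul, ← eval_mul]
  exact integral_sub (integrable_eval_mul_exp_neg hVint _) (integrable_eval_mul_exp_neg hVint _)

theorem weightedPairing_C_mul_left (c : ℝ) (f g : ℝ[X]) :
    weightedPairing V (C c * f) g = c * weightedPairing V f g := by
  simp only [weightedPairing, eval_mul, eval_C, mul_assoc, integral_const_mul]

theorem weightedPairing_mul_left_comm (f g h : ℝ[X]) :
    weightedPairing V (f * g) h = weightedPairing V (f * h) g := by
  simp only [weightedPairing, eval_mul, mul_right_comm _ (g.eval _)]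

end WeightedPairing

section Orthogonality

variable {V : ℝ → ℝ} {p : ℕ → ℝ[X]}

theorem weightedPairing_eq_zero_of_degree_lt
    (hVint : ∀ k : ℕ, Integrable (fun x : ℝ => |x| ^ k * Real.exp (-V x)))
    (hmonic : ∀ k, (p k).Monic) (hdeg : ∀ k, (p k).natDegree = k)
    (horth : ∀ k m, k ≠ m → weightedPairing V (p k) (p m) = 0)
    {k : ℕ} {q : ℝ[X]} (hq : q.degree < k) :
    weightedPairing V q (p k) = 0 := by
  suffices ∀ d ≤ k, ∀ q : ℝ[X], q.degree < d → weightedPairing V q (p k) = 0 from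
    this k le_rfl q hq
  intro d
  induction d with
  | zero =>
    intro _ q hq
    simp [weightedPairing, degree_eq_bot.mp (by simpa using hq)]
  | succ d ih =>
    intro hd q hq
    have hdrop : (q - C (q.coeff d) * p d).degree < d := by
      rw [degree_lt_iff_coeff_zero]
      intro m hm
      rcases hm.eq_or_lt with rfl | hm
      · have hlead : (p d).coeff d = 1 := by simpa [hdeg] using (hmonic d).coeff_natDegree
        simp [hlead]
      · have hqm : q.coeff m = 0 := coeff_eq_zero_of_degree_lt (hq.trans_le (by exact_mod_cast hm))
        have hpm : (p d).coeff m = 0 := coeff_eq_zero_of_natDegree_lt (by rw [hdeg]; exact hm)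
        simp [hqm, hpm]
    rw [← add_sub_cancel (C (q.coeff d) * p d) q, weightedPairing_add_left hVint,
      weightedPairing_C_mul_left, horth d k (by omega), ih (by omega) _ hdrop, mul_zero, add_zero]

theorem weightedPairing_eq_of_monic
    (hVint : ∀ k : ℕ, Integrable (fun x : ℝ => |x| ^ k * Real.exp (-V x)))
    (hmonic : ∀ k, (p k).Monic) (hdeg : ∀ k, (p k).natDegree = k)
    (horth : ∀ k m, k ≠ m → weightedPairing V (p k) (p m) = 0)
    {k : ℕ} {q : ℝ[X]} (hq : q.Monic) (hqdeg : q.natDegree = k) :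
    weightedPairing V q (p k) = weightedPairing V (p k) (p k) := by
  have hdrop : (q - p k).degree < k := by
    have hq_pk : q.degree = (p k).degree := by
      rw [degree_eq_natDegree hq.ne_zero, degree_eq_natDegree (hmonic k).ne_zero, hqdeg, hdeg]
    simpa [degree_eq_natDegree hq.ne_zero, hqdeg] using
      degree_sub_lt_left hq_pk hq.ne_zero (by rw [hq.leadingCoeff, (hmonic k).leadingCoeff])
  rw [← add_sub_cancel (p k) q, weightedPairing_add_left hVint,
    weightedPairing_eq_zero_of_degree_lt hVint hmonic hdeg horth hdrop, add_zero]

end Orthogonality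

def highTrunc (q : ℝ[X]) (n j : ℕ) : ℝ[X] :=
  ∑ m ∈ Finset.range (j + 1), C (q.coeff (n - m)) * X ^ (j - m)

section HighTrunc

variable {q : ℝ[X]} {n j : ℕ}

theorem natDegree_highTrunc_le : (highTrunc q n j).natDegree ≤ j :=
  natDegree_sum_le_of_forall_le _ _ fun _ _ =>
    (natDegree_C_mul_X_pow_le _ _).trans (Nat.sub_le _ _)

theorem degree_highTrunc_sub_X_pow_lt (hq : q.coeff n = 1) :
    (highTrunc q n j - X ^ j).degree < (j : WithBot ℕ) := by
  rw [highTrunc, Finset.sum_range_succ', Nat.sub_zero, Nat.sub_zero, hq, C_1, one_mul,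
    add_sub_cancel_right]
  refine (degree_sum_le _ _).trans_lt ((Finset.sup_lt_iff (WithBot.bot_lt_coe j)).mpr ?_)
  intro m hm
  exact (degree_C_mul_X_pow_le _ _).trans_lt (Nat.cast_lt.mpr (by simp at hm; omega))

theorem highTrunc_monic (hq : q.coeff n = 1) : (highTrunc q n j).Monic := by
  rw [← add_sub_cancel (X ^ j) (highTrunc q n j)]
  exact monic_X_pow_add (degree_highTrunc_sub_X_pow_lt hq)

theorem natDegree_highTrunc (hq : q.coeff n = 1) : (highTrunc q n j).natDegree = j := by
  rw [← add_sub_cancel (X ^ j) (highTrunc q n j),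
    natDegree_add_eq_left_of_degree_lt (by simpa using degree_highTrunc_sub_X_pow_lt hq),
    natDegree_X_pow]

theorem Ptrunc_eq_mul_eval_highTrunc {b : ℕ → ℂ} (a : ℂ)
    (hb : ∀ m ≤ j, b m = a * q.coeff (n - m)) (x : ℝ) :
    Ptrunc b j x = a * (highTrunc q n j).eval x := by
  simp only [Ptrunc, highTrunc, eval_finsetSum, eval_mul, eval_C, eval_pow, eval_X,
    Complex.ofReal_sum, Complex.ofReal_mul, Complex.ofReal_pow, Finset.mul_sum]
  refine Finset.sum_congr rfl fun m hm => ?_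
  rw [hb m (by simpa [Nat.lt_succ_iff] using hm), mul_assoc]

end HighTrunc

theorem Rfun_ofReal {n j : ℕ} (p : ℕ → ℝ[X]) (κ : ℕ → ℝ) (hj : j ≤ n) (x : ℝ) :
    Rfun n p κ j x = -(2 * Real.pi * Complex.I) * (κ (n - 1) : ℂ) ^ 2 *
      (highTrunc (p n) n j * p (n - 1) - highTrunc (p (n - 1)) n j * p n).eval x := by
  have haeval : ∀ q : ℝ[X], aeval (x : ℂ) q = q.eval x := fun q => aeval_algebraMap_apply ℂ x q
  rw [Rfun, Ptrunc_eq_mul_eval_highTrunc (b := ccoef n p κ) _ fun m hm => if_pos (hm.trans hj),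
    Ptrunc_eq_mul_eval_highTrunc (b := bcoef n p) 1 fun m hm =>
      (if_pos (hm.trans hj)).trans (one_mul _).symm,
    haeval, haeval, eval_sub, eval_mul, eval_mul]
  push_cast
  ring

theorem weightedPairing_highTrunc_sub {V : ℝ → ℝ} {p : ℕ → ℝ[X]}
    (hVint : ∀ k : ℕ, Integrable (fun x : ℝ => |x| ^ k * Real.exp (-V x)))
    (hmonic : ∀ k, (p k).Monic) (hdeg : ∀ k, (p k).natDegree = k)
    (horth : ∀ k m, k ≠ m → weightedPairing V (p k) (p m) = 0)
    {n j : ℕ} (hj : j + 1 ≤ n) :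
    weightedPairing V (highTrunc (p n) n j * p (n - 1) - highTrunc (p (n - 1)) n j * p n)
      (p (n - j - 1)) = weightedPairing V (p (n - 1)) (p (n - 1)) := by
  have hlead : (p n).coeff n = 1 := by simpa [hdeg] using (hmonic n).coeff_natDegree
  have htop : weightedPairing V (highTrunc (p n) n j * p (n - j - 1)) (p (n - 1))
      = weightedPairing V (p (n - 1)) (p (n - 1)) := by
    refine weightedPairing_eq_of_monic hVint hmonic hdeg horth
      ((highTrunc_monic hlead).mul (hmonic _)) ?_
    rw [(highTrunc_monic hlead).natDegree_mul (hmonic _), natDegree_highTrunc hlead, hdeg]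
    omega
  have hlow : weightedPairing V (highTrunc (p (n - 1)) n j * p (n - j - 1)) (p n) = 0 := by
    refine weightedPairing_eq_zero_of_degree_lt hVint hmonic hdeg horth
      (degree_le_natDegree.trans_lt (Nat.cast_lt.mpr (natDegree_mul_le.trans_lt ?_)))
    have := natDegree_highTrunc_le (q := p (n - 1)) (n := n) (j := j)
    rw [hdeg]
    omega
  rw [weightedPairing_sub_left hVint, weightedPairing_mul_left_comm,
    weightedPairing_mul_left_comm _ (p n), htop, hlow, sub_zero]

theorem R_pairing_eq_neg_two_pi_I_general
    (n : ℕ)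
    (V : ℝ → ℝ)
    (hVint : ∀ k : ℕ, MeasureTheory.Integrable (fun x : ℝ => |x| ^ k * Real.exp (-V x)))
    (p : ℕ → Polynomial ℝ)
    (hmonic : ∀ k, (p k).Monic)
    (hdeg : ∀ k, (p k).natDegree = k)
    (horth : ∀ k m, k ≠ m → ∫ x : ℝ, (p k).eval x * (p m).eval x * Real.exp (-V x) = 0)
    (κ : ℕ → ℝ) (hκpos : ∀ k, 0 < κ k)
    (hκ : ∀ k, ∫ x : ℝ, ((p k).eval x) ^ 2 * Real.exp (-V x) = ((κ k) ^ 2)⁻¹)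
    (j : ℕ) (hj : j + 1 ≤ n) :
    ∫ x : ℝ, Rfun n p κ j (x : ℂ) * (((p (n - j - 1)).eval x : ℝ) : ℂ) *
        ((Real.exp (-V x) : ℝ) : ℂ)
      = -(2 * Real.pi * Complex.I) := by
  set c : ℂ := -(2 * Real.pi * Complex.I) * (κ (n - 1) : ℂ) ^ 2
  set A := highTrunc (p n) n j * p (n - 1) - highTrunc (p (n - 1)) n j * p n
  have hnorm : weightedPairing V (p (n - 1)) (p (n - 1)) = (κ (n - 1) ^ 2)⁻¹ := by
    simpa [weightedPairing, pow_two] using hκ (n - 1)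
  calc _ = ∫ x : ℝ, c * ((A.eval x * (p (n - j - 1)).eval x * Real.exp (-V x) : ℝ) : ℂ) := by
        refine integral_congr_ae (ae_of_all _ fun x => ?_)
        simp only [Rfun_ofReal p κ (by omega : j ≤ n) x]
        push_cast
        ring
    _ = c * (weightedPairing V A (p (n - j - 1)) : ℂ) := by
        rw [integral_const_mul, integral_complex_ofReal]
        rfl
    _ = c * ((κ (n - 1) ^ 2)⁻¹ : ℝ) := by
        rw [weightedPairing_highTrunc_sub hVint hmonic hdeg horth hj, hnorm]
    _ = -(2 * Real.pi * Complex.I) := by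
        have hκ0 : (κ (n - 1) : ℂ) ≠ 0 := Complex.ofReal_ne_zero.mpr (hκpos _).ne'
        push_cast
        simp only [c]
        field_simp

/-- For `0 ≤ j ≤ n−1`, the pairing of `R_j = −Q_n^j π_n + P_n^j (−2πi κ_{n-1}² π_{n-1})`
with `π_{n−j−1}` equals `−2πi`. -/
theorem R_pairing_eq_neg_two_pi_I
    (n : ℕ) (hn : 1 ≤ n)
    (V : ℝ → ℝ) (hV : Continuous V)
    (hVint : ∀ k : ℕ, MeasureTheory.Integrable (fun x : ℝ => |x| ^ k * Real.exp (-V x)))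
    (p : ℕ → Polynomial ℝ)
    (hmonic : ∀ k, (p k).Monic)
    (hdeg : ∀ k, (p k).natDegree = k)
    (horth : ∀ k m, k ≠ m → ∫ x : ℝ, (p k).eval x * (p m).eval x * Real.exp (-V x) = 0)
    (κ : ℕ → ℝ) (hκpos : ∀ k, 0 < κ k)
    (hκ : ∀ k, ∫ x : ℝ, ((p k).eval x) ^ 2 * Real.exp (-V x) = ((κ k) ^ 2)⁻¹)
    (j : ℕ) (hj : j + 1 ≤ n) :
    ∫ x : ℝ, Rfun n p κ j (x : ℂ) * (((p (n - j - 1)).eval x : ℝ) : ℂ) *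
        ((Real.exp (-V x) : ℝ) : ℂ)
      = -(2 * Real.pi * Complex.I) :=
  R_pairing_eq_neg_two_pi_I_general n V hVint p hmonic hdeg horth κ hκpos hκ j hj

end
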